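/- arXiv:1703.06180 — 5 statements merged into one kernel-verified Lean document; each statement's English description precedes it below -/
import Mathlib

section
/- The balanced IPS estimator is unbiased: if the mixture policy π_avg(y|x) = (Σ_{i=1}^m n_i π_i(y|x))/n has support for the target π̄, then E[Û_bal(π̄)] = U(π̄), where Û_bal(π̄) = (1/n) Σ_i Σ_j δ(x_j^i, y_j^i) · π̄(y_j^i|x_j^i) / π_avg(y_j^i|x_j^i). -/
open Finset

/-- Expectation over the combined log data: `nsz i` independent samples
`x ~ Pr`, `y ~ π i (·|x)` from each logging policy `π i`. -/
noncomputable def logExp {X Y : Type} [Fintype X] [Fintype Y] (m : ℕ) (nsz : Fin m → ℕ)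
    (Pr : X → ℝ) (π : Fin m → X → Y → ℝ)
    (f : (((i : Fin m) × Fin (nsz i)) → X × Y) → ℝ) : ℝ :=
  ∑ d : ((i : Fin m) × Fin (nsz i)) → X × Y,
    (∏ s : (i : Fin m) × Fin (nsz i), Pr (d s).1 * π s.1 (d s).1 (d s).2) * f d

/-- The mixture policy `π_avg(y|x) = (∑ i, n_i π_i(y|x)) / n`. -/
noncomputable def piAvg {X Y : Type} (m : ℕ) (nsz : Fin m → ℕ)
    (π : Fin m → X → Y → ℝ) (x : X) (y : Y) : ℝ :=
  (∑ i, (nsz i : ℝ) * π i x y) / (∑ i, (nsz i : ℝ))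

/-- The balanced IPS estimator, as a function of the log data. -/
noncomputable def uBal {X Y : Type} (m : ℕ) (nsz : Fin m → ℕ)
    (δ : X → Y → ℝ) (tgt : X → Y → ℝ) (π : Fin m → X → Y → ℝ)
    (d : ((i : Fin m) × Fin (nsz i)) → X × Y) : ℝ :=
  (1 / (∑ i, (nsz i : ℝ))) *
    ∑ s : (i : Fin m) × Fin (nsz i),
      δ (d s).1 (d s).2 * tgt (d s).1 (d s).2 / piAvg m nsz π (d s).1 (d s).2

lemma sum_pi_prod_aux {S A : Type} [Fintype S] [DecidableEq S] [Fintype A]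
    (w : S → A → ℝ) (hw : ∀ s, ∑ a, w s a = 1) (s0 : S) (g : A → ℝ) :
    ∑ d : S → A, (∏ s, w s (d s)) * g (d s0) = ∑ a, w s0 a * g a := by
  have h1 : ∀ d : S → A, (∏ s, w s (d s)) * g (d s0)
      = ∏ s, (w s (d s) * if s = s0 then g (d s) else 1) := by
    intro d
    rw [Finset.prod_mul_distrib, Finset.prod_ite_eq' Finset.univ s0 (fun s => g (d s))]
    simp
  simp_rw [h1]
  have h2 := Finset.prod_univ_sum (κ := fun _ : S => A) (fun _ => Finset.univ)
    (fun s a => w s a * if s = s0 then g a else 1)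
  rw [Fintype.piFinset_univ] at h2
  rw [← h2]
  rw [Finset.prod_eq_single s0 (fun s _ hs => by simp [hs, hw s]) (by simp)]
  simp

theorem balanced_ips_unbiased
    {X Y : Type} [Fintype X] [Fintype Y]
    (m : ℕ) (nsz : Fin m → ℕ)
    (Pr : X → ℝ) (δ : X → Y → ℝ)
    (tgt : X → Y → ℝ) (π : Fin m → X → Y → ℝ)
    (hPr0 : ∀ x, 0 ≤ Pr x) (hPr1 : ∑ x, Pr x = 1)
    (htgt0 : ∀ x y, 0 ≤ tgt x y) (htgt1 : ∀ x, ∑ y, tgt x y = 1)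
    (hπ0 : ∀ i x y, 0 ≤ π i x y) (hπ1 : ∀ i x, ∑ y, π i x y = 1)
    (hsupp : ∀ x y, δ x y * tgt x y ≠ 0 → 0 < piAvg m nsz π x y)
    (hn : 0 < ∑ i, nsz i) :
    logExp m nsz Pr π (uBal m nsz δ tgt π) = ∑ x, ∑ y, Pr x * tgt x y * δ x y := by
  set n : ℝ := ∑ i, (nsz i : ℝ) with hn_def
  have hn' : 0 < n := by
    rw [hn_def]
    exact_mod_cast (by exact_mod_cast hn : (0:ℝ) < (∑ i, nsz i : ℕ))
  set S := (i : Fin m) × Fin (nsz i)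
  set w : S → X × Y → ℝ := fun s p => Pr p.1 * π s.1 p.1 p.2 with hw_def
  have hw : ∀ s : S, ∑ p : X × Y, w s p = 1 := by
    intro s
    rw [Fintype.sum_prod_type]
    simp_rw [hw_def, ← Finset.mul_sum, hπ1, mul_one]
    exact hPr1
  set h : X × Y → ℝ := fun p => δ p.1 p.2 * tgt p.1 p.2 / piAvg m nsz π p.1 p.2 with hh_def
  have step1 : logExp m nsz Pr π (uBal m nsz δ tgt π)
      = (1 / n) * ∑ s : S, ∑ p : X × Y, w s p * h p := by
    unfold logExp uBal
    have e1 : ∀ d : S → X × Y,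
        (∏ s : S, Pr (d s).1 * π s.1 (d s).1 (d s).2) *
          ((1 / n) * ∑ s : S, δ (d s).1 (d s).2 * tgt (d s).1 (d s).2
              / piAvg m nsz π (d s).1 (d s).2)
        = (1 / n) * ∑ s : S, (∏ t : S, Pr (d t).1 * π t.1 (d t).1 (d t).2) *
            (δ (d s).1 (d s).2 * tgt (d s).1 (d s).2 / piAvg m nsz π (d s).1 (d s).2) := by
      intro d
      rw [mul_left_comm, Finset.mul_sum]
    simp_rw [← hn_def]
    refine (Finset.sum_congr rfl fun d _ => e1 d).trans ?_
    rw [← Finset.mul_sum]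
    congr 1
    rw [Finset.sum_comm]
    exact Finset.sum_congr rfl fun s _ => sum_pi_prod_aux w hw s h
  rw [step1]
  have step2 : ∑ s : S, ∑ p : X × Y, w s p * h p
      = ∑ i : Fin m, (nsz i : ℝ) * ∑ p : X × Y, (Pr p.1 * π i p.1 p.2) * h p := by
    rw [← Finset.univ_sigma_univ, Finset.sum_sigma]
    refine Finset.sum_congr rfl fun i _ => ?_
    simp only [hw_def]
    rw [Finset.sum_const, Finset.card_univ, Fintype.card_fin, nsmul_eq_mul]
  rw [step2]
  have step3 : ∑ i : Fin m, (nsz i : ℝ) * ∑ p : X × Y, (Pr p.1 * π i p.1 p.2) * h p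
      = ∑ p : X × Y, ∑ i : Fin m, (nsz i : ℝ) * ((Pr p.1 * π i p.1 p.2) * h p) := by
    simp_rw [Finset.mul_sum]
    exact Finset.sum_comm
  rw [step3]
  have key : ∀ p : X × Y, ∑ i : Fin m, (nsz i : ℝ) * ((Pr p.1 * π i p.1 p.2) * h p)
      = n * (Pr p.1 * tgt p.1 p.2 * δ p.1 p.2) := by
    rintro ⟨x, y⟩
    have hsum : ∑ i : Fin m, (nsz i : ℝ) * π i x y = n * piAvg m nsz π x y := by
      rw [piAvg, mul_div_cancel₀ _ (ne_of_gt hn')]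
    have e2 : ∑ i : Fin m, (nsz i : ℝ) * ((Pr x * π i x y) * h (x, y))
        = (Pr x * h (x, y)) * ∑ i : Fin m, (nsz i : ℝ) * π i x y := by
      rw [Finset.mul_sum]
      exact Finset.sum_congr rfl fun i _ => by ring
    have hmul : h (x, y) * piAvg m nsz π x y = δ x y * tgt x y := by
      by_cases hz : δ x y * tgt x y = 0
      · simp [hh_def, hz]
      · exact div_mul_cancel₀ _ (ne_of_gt (hsupp x y hz))
    rw [e2, hsum, show (Pr x * h (x, y)) * (n * piAvg m nsz π x y)
        = n * (Pr x * (h (x, y) * piAvg m nsz π x y)) by ring, hmul]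
    ring
  simp_rw [key]
  rw [← Finset.mul_sum, ← mul_assoc, one_div, inv_mul_cancel₀ (ne_of_gt hn'), one_mul,
    Fintype.sum_prod_type]
end

section
/- The variance of the balanced IPS estimator is at most that of the naive IPS estimator: if each logging policy π_i has support for the target π̄, then Var[Û_bal(π̄)] ≤ Var[Û_naive(π̄)]. -/
open Finset

/-- Expectation over log data consisting of one independent sample
`x_j ~ Pr`, `y_j ~ π j (·|x_j)` from each of the `m` logging policies. -/
noncomputable def logExp1 {X Y : Type} [Fintype X] [Fintype Y] (m : ℕ)
    (Pr : X → ℝ) (π : Fin m → X → Y → ℝ) (f : (Fin m → X × Y) → ℝ) : ℝ :=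
  ∑ d : Fin m → X × Y,
    (∏ j, Pr (d j).1 * π j (d j).1 (d j).2) * f d

/-- Variance over the log data. -/
noncomputable def logVar1 {X Y : Type} [Fintype X] [Fintype Y] (m : ℕ)
    (Pr : X → ℝ) (π : Fin m → X → Y → ℝ) (f : (Fin m → X × Y) → ℝ) : ℝ :=
  logExp1 m Pr π (fun d => (f d) ^ 2) - (logExp1 m Pr π f) ^ 2

lemma bips_prod_sum_swap {S : Type} [Fintype S] (m : ℕ) (ν : Fin m → S → ℝ) :
    ∑ d : Fin m → S, ∏ j, ν j (d j) = ∏ j, ∑ s, ν j s := by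
  rw [Finset.prod_univ_sum]; simp [Fintype.piFinset_univ]

lemma bips_marginal {S : Type} [Fintype S] (m : ℕ) (ν : Fin m → S → ℝ)
    (hmass : ∀ j, ∑ s, ν j s = 1) (k : Fin m) (g : S → ℝ) :
    ∑ d : Fin m → S, (∏ j, ν j (d j)) * g (d k) = ∑ s, ν k s * g s := by
  have key : ∀ (w : Fin m → ℝ), ∏ i, w i = w k * ∏ i ∈ univ.erase k, w i := by
    intro w; rw [← Finset.mul_prod_erase univ w (mem_univ k)]
  have h1 : ∀ d : Fin m → S, (∏ j, ν j (d j)) * g (d k)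
      = ∏ j, (if j = k then ν j (d j) * g (d j) else ν j (d j)) := by
    intro d
    rw [key (fun i => ν i (d i)), key (fun j => if j = k then ν j (d j) * g (d j) else ν j (d j))]
    rw [Finset.prod_congr rfl (fun i hi =>
      show (if i = k then ν i (d i) * g (d i) else ν i (d i)) = ν i (d i) by
        simp [Finset.ne_of_mem_erase hi])]
    simp; ring
  rw [Finset.sum_congr rfl (fun d _ => h1 d),
    bips_prod_sum_swap m (fun j s => if j = k then ν j s * g s else ν j s),
    key (fun j => ∑ s, if j = k then ν j s * g s else ν j s)]
  have : ∏ i ∈ univ.erase k, (∑ s, if i = k then ν i s * g s else ν i s) = 1 :=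
    Finset.prod_eq_one (fun i hi => by simp [Finset.ne_of_mem_erase hi, hmass i])
  rw [this]; simp

lemma bips_cross {S : Type} [Fintype S] (m : ℕ) (ν : Fin m → S → ℝ)
    (hmass : ∀ j, ∑ s, ν j s = 1) (j k : Fin m) (hjk : j ≠ k) (g h : S → ℝ) :
    ∑ d : Fin m → S, (∏ i, ν i (d i)) * (g (d j) * h (d k))
      = (∑ s, ν j s * g s) * (∑ s, ν k s * h s) := by
  have hkj : k ∈ univ.erase j := Finset.mem_erase.2 ⟨hjk.symm, mem_univ k⟩
  have key : ∀ (w : Fin m → ℝ), ∏ i, w i = w j * (w k * ∏ i ∈ (univ.erase j).erase k, w i) := by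
    intro w
    rw [← Finset.mul_prod_erase univ w (mem_univ j), ← Finset.mul_prod_erase (univ.erase j) w hkj]
  have h1 : ∀ d : Fin m → S, (∏ i, ν i (d i)) * (g (d j) * h (d k))
      = ∏ i, (if i = j then ν i (d i) * g (d i) else if i = k then ν i (d i) * h (d i) else ν i (d i)) := by
    intro d
    rw [key (fun i => ν i (d i)),
      key (fun i => if i = j then ν i (d i) * g (d i) else if i = k then ν i (d i) * h (d i) else ν i (d i))]
    rw [Finset.prod_congr rfl (fun i hi =>
      show (if i = j then ν i (d i) * g (d i) else if i = k then ν i (d i) * h (d i) else ν i (d i)) = ν i (d i) by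
        simp [Finset.ne_of_mem_erase hi, Finset.ne_of_mem_erase (Finset.mem_of_mem_erase hi)])]
    simp [if_neg hjk.symm]; ring
  rw [Finset.sum_congr rfl (fun d _ => h1 d),
    bips_prod_sum_swap m (fun i s => if i = j then ν i s * g s else if i = k then ν i s * h s else ν i s),
    key (fun i => ∑ s, if i = j then ν i s * g s else if i = k then ν i s * h s else ν i s)]
  have : ∏ i ∈ (univ.erase j).erase k,
      (∑ s, if i = j then ν i s * g s else if i = k then ν i s * h s else ν i s) = 1 :=
    Finset.prod_eq_one (fun i hi => by
      simp [Finset.ne_of_mem_erase hi, Finset.ne_of_mem_erase (Finset.mem_of_mem_erase hi), hmass i])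
  rw [this]; simp [if_neg hjk.symm]

lemma bips_var_sum {S : Type} [Fintype S] (m : ℕ) (ν : Fin m → S → ℝ)
    (hmass : ∀ j, ∑ s, ν j s = 1) (g : Fin m → S → ℝ) :
    (∑ d : Fin m → S, (∏ j, ν j (d j)) * (∑ j, g j (d j)) ^ 2)
      - (∑ d : Fin m → S, (∏ j, ν j (d j)) * ∑ j, g j (d j)) ^ 2
    = ∑ j, ((∑ s, ν j s * (g j s) ^ 2) - (∑ s, ν j s * g j s) ^ 2) := by
  have T1 : (∑ d : Fin m → S, (∏ j, ν j (d j)) * ∑ j, g j (d j))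
      = ∑ j, ∑ s, ν j s * g j s := by
    calc (∑ d : Fin m → S, (∏ j, ν j (d j)) * ∑ j, g j (d j))
        = ∑ d : Fin m → S, ∑ j, (∏ i, ν i (d i)) * g j (d j) := by
          exact Finset.sum_congr rfl (fun d _ => Finset.mul_sum _ _ _)
      _ = ∑ j, ∑ d : Fin m → S, (∏ i, ν i (d i)) * g j (d j) := Finset.sum_comm
      _ = ∑ j, ∑ s, ν j s * g j s :=
          Finset.sum_congr rfl (fun j _ => bips_marginal m ν hmass j (g j))
  have T2 : (∑ d : Fin m → S, (∏ j, ν j (d j)) * (∑ j, g j (d j)) ^ 2)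
      = ∑ j, ∑ k, (if j = k then ∑ s, ν j s * (g j s) ^ 2
          else (∑ s, ν j s * g j s) * (∑ s, ν k s * g k s)) := by
    calc (∑ d : Fin m → S, (∏ j, ν j (d j)) * (∑ j, g j (d j)) ^ 2)
        = ∑ d : Fin m → S, ∑ j, ∑ k, (∏ i, ν i (d i)) * (g j (d j) * g k (d k)) := by
          refine Finset.sum_congr rfl (fun d _ => ?_)
          rw [sq, Finset.sum_mul_sum, Finset.mul_sum]
          exact Finset.sum_congr rfl (fun j _ => Finset.mul_sum _ _ _)
      _ = ∑ j, ∑ k, ∑ d : Fin m → S, (∏ i, ν i (d i)) * (g j (d j) * g k (d k)) := by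
          rw [Finset.sum_comm]
          exact Finset.sum_congr rfl (fun j _ => Finset.sum_comm)
      _ = ∑ j, ∑ k, (if j = k then ∑ s, ν j s * (g j s) ^ 2
          else (∑ s, ν j s * g j s) * (∑ s, ν k s * g k s)) := by
          refine Finset.sum_congr rfl (fun j _ => Finset.sum_congr rfl (fun k _ => ?_))
          by_cases hjk : j = k
          · subst hjk
            rw [if_pos rfl, ← bips_marginal m ν hmass j (fun s => (g j s) ^ 2)]
            exact Finset.sum_congr rfl (fun d _ => by rw [sq])
          · rw [if_neg hjk, bips_cross m ν hmass j k hjk]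
  rw [T1, T2, sq, Finset.sum_mul_sum, ← Finset.sum_sub_distrib]
  refine Finset.sum_congr rfl (fun j _ => ?_)
  rw [← Finset.sum_sub_distrib]
  rw [Finset.sum_congr rfl (fun k _ =>
    show (if j = k then ∑ s, ν j s * (g j s) ^ 2
          else (∑ s, ν j s * g j s) * (∑ s, ν k s * g k s))
        - (∑ s, ν j s * g j s) * (∑ s, ν k s * g k s)
      = (if j = k then (∑ s, ν j s * (g j s) ^ 2) - (∑ s, ν j s * g j s) ^ 2 else 0) by
    by_cases hjk : j = k
    · subst hjk; rw [if_pos rfl, if_pos rfl, sq]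
    · rw [if_neg hjk, if_neg hjk, sub_self])]
  simp

lemma bips_var_scaled {S : Type} [Fintype S] (m : ℕ) (ν : Fin m → S → ℝ)
    (hmass : ∀ j, ∑ s, ν j s = 1) (c : ℝ) (g : Fin m → S → ℝ) :
    (∑ d : Fin m → S, (∏ j, ν j (d j)) * (c * ∑ j, g j (d j)) ^ 2)
      - (∑ d : Fin m → S, (∏ j, ν j (d j)) * (c * ∑ j, g j (d j))) ^ 2
    = c ^ 2 * ∑ j, ((∑ s, ν j s * (g j s) ^ 2) - (∑ s, ν j s * g j s) ^ 2) := by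
  have e1 : (∑ d : Fin m → S, (∏ j, ν j (d j)) * (c * ∑ j, g j (d j)) ^ 2)
      = c ^ 2 * ∑ d : Fin m → S, (∏ j, ν j (d j)) * (∑ j, g j (d j)) ^ 2 := by
    rw [Finset.mul_sum]; exact Finset.sum_congr rfl (fun d _ => by ring)
  have e2 : (∑ d : Fin m → S, (∏ j, ν j (d j)) * (c * ∑ j, g j (d j)))
      = c * ∑ d : Fin m → S, (∏ j, ν j (d j)) * (∑ j, g j (d j)) := by
    rw [Finset.mul_sum]; exact Finset.sum_congr rfl (fun d _ => by ring)
  rw [e1, e2, mul_pow, ← mul_sub, bips_var_sum m ν hmass g]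

lemma bips_pointwise (m : ℕ) (hm : 0 < m) (t : ℝ) (p : Fin m → ℝ)
    (hsupp : t ≠ 0 → ∀ j, 0 < p j) :
    ∑ j : Fin m, p j * (t / ((1 / (m : ℝ)) * ∑ i, p i)) ^ 2
      ≤ ∑ j : Fin m, p j * (t / p j) ^ 2 := by
  by_cases ht : t = 0
  · simp [ht]
  have hpos := hsupp ht
  have hs : 0 < ∑ i, p i := Finset.sum_pos (fun i _ => hpos i) ⟨⟨0, hm⟩, mem_univ _⟩
  have hm' : (m : ℝ) ≠ 0 := Nat.cast_ne_zero.2 hm.ne'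
  have hL : ∑ j : Fin m, p j * (t / ((1 / (m : ℝ)) * ∑ i, p i)) ^ 2
      = (∑ _j : Fin m, t) ^ 2 / ∑ i, p i := by
    rw [← Finset.sum_mul, Finset.sum_const, Finset.card_univ, Fintype.card_fin,
      nsmul_eq_mul]
    field_simp
  have hR : ∑ j : Fin m, p j * (t / p j) ^ 2 = ∑ j : Fin m, t ^ 2 / p j := by
    refine Finset.sum_congr rfl (fun j _ => ?_)
    have h0 := (hpos j).ne'
    field_simp
  rw [hL, hR]
  exact Finset.sq_sum_div_le_sum_sq_div univ (fun _ => t) (fun i _ => hpos i)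

set_option maxHeartbeats 1600000 in
theorem balanced_ips_variance_le_naive
    {X Y : Type} [Fintype X] [Fintype Y] (m : ℕ)
    (Pr : X → ℝ) (δ : X → Y → ℝ)
    (tgt : X → Y → ℝ) (π : Fin m → X → Y → ℝ)
    (hPr0 : ∀ x, 0 ≤ Pr x) (hPr1 : ∑ x, Pr x = 1)
    (htgt0 : ∀ x y, 0 ≤ tgt x y) (htgt1 : ∀ x, ∑ y, tgt x y = 1)
    (hπ0 : ∀ i x y, 0 ≤ π i x y) (hπ1 : ∀ i x, ∑ y, π i x y = 1)
    (hsupp : ∀ i x y, δ x y * tgt x y ≠ 0 → 0 < π i x y) :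
    logVar1 m Pr π
        (fun d => (1 / (m : ℝ)) *
          ∑ j, δ (d j).1 (d j).2 * tgt (d j).1 (d j).2 /
            ((1 / (m : ℝ)) * ∑ i, π i (d j).1 (d j).2))
      ≤ logVar1 m Pr π
          (fun d => (1 / (m : ℝ)) *
            ∑ j, δ (d j).1 (d j).2 * tgt (d j).1 (d j).2 / π j (d j).1 (d j).2) := by
  rcases Nat.eq_zero_or_pos m with hm | hm
  · subst hm
    simp [logVar1, logExp1]
  have hm' : (m : ℝ) ≠ 0 := Nat.cast_ne_zero.2 hm.ne'
  have hmass : ∀ j : Fin m, ∑ s : X × Y, Pr s.1 * π j s.1 s.2 = 1 := by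
    intro j
    rw [Fintype.sum_prod_type]
    simp_rw [← Finset.mul_sum, hπ1, mul_one]
    exact hPr1
  simp only [logVar1, logExp1]
  have hB := bips_var_scaled (S := X × Y) m (fun j p => Pr p.1 * π j p.1 p.2) hmass
    (1 / (m : ℝ)) (fun _ p => δ p.1 p.2 * tgt p.1 p.2 / ((1 / (m : ℝ)) * ∑ i, π i p.1 p.2))
  have hN := bips_var_scaled (S := X × Y) m (fun j p => Pr p.1 * π j p.1 p.2) hmass
    (1 / (m : ℝ)) (fun j p => δ p.1 p.2 * tgt p.1 p.2 / π j p.1 p.2)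
  rw [hB, hN]
  refine mul_le_mul_of_nonneg_left ?_ (sq_nonneg _)
  rw [Finset.sum_sub_distrib, Finset.sum_sub_distrib]
  refine sub_le_sub ?_ ?_
  · -- second moments
    refine le_trans (le_of_eq Finset.sum_comm) (le_trans ?_ (le_of_eq Finset.sum_comm))
    refine Finset.sum_le_sum (fun s _ => ?_)
    simp_rw [mul_assoc, ← Finset.mul_sum]
    refine mul_le_mul_of_nonneg_left ?_ (hPr0 s.1)
    exact bips_pointwise m hm (δ s.1 s.2 * tgt s.1 s.2) (fun j => π j s.1 s.2)
      (fun ht j => hsupp j s.1 s.2 ht)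
  · -- squared means
    set U : ℝ := ∑ s : X × Y, Pr s.1 * (δ s.1 s.2 * tgt s.1 s.2) with hU
    have hEN : ∀ j : Fin m,
        (∑ s : X × Y, Pr s.1 * π j s.1 s.2 * (δ s.1 s.2 * tgt s.1 s.2 / π j s.1 s.2)) = U := by
      intro j
      refine Finset.sum_congr rfl (fun s _ => ?_)
      by_cases hπ : π j s.1 s.2 = 0
      · have ht : δ s.1 s.2 * tgt s.1 s.2 = 0 := by
          by_contra h
          exact absurd (hsupp j s.1 s.2 h) (by simp [hπ])
        simp [hπ, ht]
      · field_simp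
    have hEBsum : (∑ j : Fin m, ∑ s : X × Y, Pr s.1 * π j s.1 s.2 *
        (δ s.1 s.2 * tgt s.1 s.2 / ((1 / (m : ℝ)) * ∑ i, π i s.1 s.2))) = (m : ℝ) * U := by
      rw [Finset.sum_comm, hU, Finset.mul_sum]
      refine Finset.sum_congr rfl (fun s _ => ?_)
      simp_rw [mul_assoc, ← Finset.mul_sum, ← Finset.sum_mul]
      by_cases hσ : (∑ i, π i s.1 s.2) = 0
      · have ht : δ s.1 s.2 * tgt s.1 s.2 = 0 := by
          by_contra h
          have h1 : 0 < π ⟨0, hm⟩ s.1 s.2 := hsupp _ s.1 s.2 h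
          have h2 : π ⟨0, hm⟩ s.1 s.2 ≤ ∑ i, π i s.1 s.2 :=
            Finset.single_le_sum (fun i _ => hπ0 i s.1 s.2) (mem_univ _)
          linarith
        simp [hσ, ht]
      · field_simp
    have hENsq : (∑ j : Fin m, (∑ s : X × Y, Pr s.1 * π j s.1 s.2 *
        (δ s.1 s.2 * tgt s.1 s.2 / π j s.1 s.2)) ^ 2) = (m : ℝ) * U ^ 2 := by
      rw [Finset.sum_congr rfl (fun j _ => by rw [hEN j]), Finset.sum_const,
        Finset.card_univ, Fintype.card_fin, nsmul_eq_mul]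
    rw [hENsq]
    have hCS := sq_sum_le_card_mul_sum_sq (s := (univ : Finset (Fin m)))
      (f := fun j => ∑ s : X × Y, Pr s.1 * π j s.1 s.2 *
        (δ s.1 s.2 * tgt s.1 s.2 / ((1 / (m : ℝ)) * ∑ i, π i s.1 s.2)))
    rw [hEBsum, Finset.card_univ, Fintype.card_fin] at hCS
    have hmpos : (0 : ℝ) < m := Nat.cast_pos.2 hm
    nlinarith [hCS]
end

section
/- For nonnegative functions c(x,y) ≥ 0 and positive probabilities: Σ_{i=1}^m ( Σ_{x,y} c(x,y)·Pr(x)·π_i(y|x) / π_avg(y|x) )² ≥ m · ( Σ_{x,y} c(x,y)·Pr(x) )², where π_avg(y|x) = (1/m) Σ_{i=1}^m π_i(y|x) > 0 on the support of c. -/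
open Finset

theorem key_cauchy_schwarz_inequality
    {X Y : Type} [Fintype X] [Fintype Y] (m : ℕ)
    (Pr : X → ℝ) (c : X → Y → ℝ) (π : Fin m → X → Y → ℝ)
    (hPr0 : ∀ x, 0 ≤ Pr x) (hPr1 : ∑ x, Pr x = 1)
    (hc : ∀ x y, 0 ≤ c x y)
    (hπ0 : ∀ i x y, 0 ≤ π i x y) (hπ1 : ∀ i x, ∑ y, π i x y = 1)
    (havg : ∀ x y, c x y ≠ 0 → 0 < (1 / (m : ℝ)) * ∑ i, π i x y) :
    (m : ℝ) * (∑ x, ∑ y, c x y * Pr x) ^ 2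
      ≤ ∑ i, (∑ x, ∑ y, c x y * Pr x * π i x y / ((1 / (m : ℝ)) * ∑ j, π j x y)) ^ 2 := by
  rcases Nat.eq_zero_or_pos m with hm | hm
  · subst hm; simp
  set a : Fin m → ℝ := fun i => ∑ x, ∑ y, c x y * Pr x * π i x y / ((1 / (m : ℝ)) * ∑ j, π j x y)
    with ha
  have hmR : (0 : ℝ) < m := by exact_mod_cast hm
  have key : ∑ i, a i = (m : ℝ) * ∑ x, ∑ y, c x y * Pr x := by
    rw [ha, Finset.mul_sum]
    rw [Finset.sum_comm]
    refine Finset.sum_congr rfl fun x _ => ?_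
    rw [Finset.mul_sum, Finset.sum_comm]
    refine Finset.sum_congr rfl fun y _ => ?_
    by_cases hcy : c x y = 0
    · simp [hcy]
    · have hpos := havg x y hcy
      have hne : ((1 / (m : ℝ)) * ∑ j, π j x y) ≠ 0 := ne_of_gt hpos
      have hs : (∑ j : Fin m, π j x y) ≠ 0 := right_ne_zero_of_mul hne
      rw [← Finset.sum_div, ← Finset.mul_sum]
      field_simp
  have cs : (∑ i, a i) ^ 2 ≤ (m : ℝ) * ∑ i, a i ^ 2 := by
    have := sq_sum_le_card_mul_sum_sq (s := Finset.univ) (f := a)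
    simpa using this
  rw [key] at cs
  have : (m : ℝ) * ((m : ℝ) * (∑ x, ∑ y, c x y * Pr x) ^ 2) ≤ (m : ℝ) * ∑ i, a i ^ 2 := by
    calc (m : ℝ) * ((m : ℝ) * (∑ x, ∑ y, c x y * Pr x) ^ 2)
        = ((m : ℝ) * ∑ x, ∑ y, c x y * Pr x) ^ 2 := by ring
      _ ≤ (m : ℝ) * ∑ i, a i ^ 2 := cs
  exact le_of_mul_le_mul_left this hmR
end

section
/- Two-logger variance reduction: for m = 2 loggers with r = n_1/n_2 > 0 and v = σ_1²/σ_2² > 0, the variance ratio of the weighted to the naive estimator is γ = (r+1)² v / ((rv + 1)(r + v)), and 0 < γ ≤ 1, with equality γ = 1 if and only if v = 1. -/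
theorem two_logger_variance_reduction
    (r v : ℝ) (hr : 0 < r) (hv : 0 < v) :
    0 < (r + 1) ^ 2 * v / ((r * v + 1) * (r + v)) ∧
      (r + 1) ^ 2 * v / ((r * v + 1) * (r + v)) ≤ 1 ∧
      ((r + 1) ^ 2 * v / ((r * v + 1) * (r + v)) = 1 ↔ v = 1) := by
  have hden : 0 < (r * v + 1) * (r + v) := by positivity
  have hkey : (r * v + 1) * (r + v) - (r + 1) ^ 2 * v = r * (v - 1) ^ 2 := by ring
  refine ⟨by positivity, ?_, ?_⟩
  · rw [div_le_one hden]
    nlinarith [sq_nonneg (v - 1)]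
  · rw [div_eq_one_iff_eq hden.ne']
    constructor
    · intro h
      have h2 : r * (v - 1) ^ 2 = 0 := by linarith [hkey, h]
      have : (v - 1) ^ 2 = 0 := by
        rcases mul_eq_zero.mp h2 with h3 | h3
        · exact absurd h3 hr.ne'
        · exact h3
      have := pow_eq_zero_iff (n := 2) (by norm_num) |>.mp this
      linarith
    · intro h; subst h; ring
end

section
/- Dropping data can reduce naive IPS variance: there exist a finite context set X with distribution Pr, finite action set Y, utility δ, target policy π̄, and logging policies π_1, π_2 with one sample each, such that the variance of the naive IPS estimator using both samples strictly exceeds the variance of the naive IPS estimator using only the sample from π_2. Concretely, with X = {x_1,x_2}, Y = {y_1,y_2}, Pr uniform, δ(x_1,y_1)=δ(x_2,y_2)=10, δ(x_1,y_2)=δ(x_2,y_1)=1, π_1(y_1|x_1)=0.2, π_1(y_1|x_2)=0.8, π_2(y_1|x_1)=0.9, π_2(y_1|x_2)=0.1, π̄(y_1|x_1)=0.8, π̄(y_1|x_2)=0.2 (with complementary probabilities for y_2), the combined-data variance is ≈64.27 while the π_2-only variance is ≈4.27; in particular the former is strictly larger. -/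
open Finset

/-- The divergence `σ²_δ(π̄ ‖ π)` (= variance of the one-sample IPS estimate). -/
noncomputable def divergence (Pr : Fin 2 → ℝ) (δ tgt π : Matrix (Fin 2) (Fin 2) ℝ) : ℝ :=
  (∑ x, ∑ y, Pr x * (δ x y * tgt x y) ^ 2 / π x y)
    - (∑ x, ∑ y, Pr x * tgt x y * δ x y) ^ 2

/-- The toy instance: uniform `Pr`, `δ`, loggers `π₁, π₂` and target `π̄`. -/
noncomputable def PrToy : Fin 2 → ℝ := fun _ => 1 / 2
noncomputable def deltaToy : Matrix (Fin 2) (Fin 2) ℝ := !![10, 1; 1, 10]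
noncomputable def pi1Toy : Matrix (Fin 2) (Fin 2) ℝ := !![0.2, 0.8; 0.8, 0.2]
noncomputable def pi2Toy : Matrix (Fin 2) (Fin 2) ℝ := !![0.9, 0.1; 0.1, 0.9]
noncomputable def tgtToy : Matrix (Fin 2) (Fin 2) ℝ := !![0.8, 0.2; 0.2, 0.8]

/-- Dropping the data from logger 1 strictly reduces the variance of the naive
IPS estimator: the combined-data variance `(1/4)(σ₁² + σ₂²)` strictly exceeds
the `π₂`-only variance `σ₂²`. -/
theorem dropping_data_reduces_naive_variance :
    divergence PrToy deltaToy tgtToy pi2Toy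
      < (1 / 4) * (divergence PrToy deltaToy tgtToy pi1Toy
          + divergence PrToy deltaToy tgtToy pi2Toy) := by
  simp only [divergence, PrToy, deltaToy, pi1Toy, pi2Toy, tgtToy, Fin.sum_univ_two,
    Matrix.cons_val', Matrix.cons_val_zero, Matrix.cons_val_one, Matrix.head_cons,
    Matrix.empty_val', Matrix.cons_val_fin_one, Matrix.head_fin_const]
  norm_num
end
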